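/- arXiv:1903.04242 — 4 statements merged into one kernel-verified Lean document; each statement's English description precedes it below -/
import Mathlib

section
/- For every n ≥ 3, all V₁,…,V_n ∈ 𝕍₁, and all x₀ ≥ 0, k > 0, the change-of-variables identity 2^n √(π/2) · W[V₁,…,V_n](x₀,k) = ∫_{x₀}^∞ dx₁ ∫_{x₀}^∞ dx₂ ∫_{x₁}^∞ dx₃ ∫_{x₂}^∞ dx₄ ⋯ ∫_{x_{n−2}}^∞ dx_n ( ∏_{j=1}^n V_j((x_j+x_{j−1})/2) ) sin(k x_n − η(k)) holds, where for j ≥ 3 the variable x_j ranges over (x_{j−2}, ∞). -/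
open MeasureTheory Set Filter

/-- Complex-exponential encoding of the nested oscillatory integral: `Wexp k ηk σ n V b`
is `∫_b^∞ dx₁ ⋯ ∫_{x_{n-1}}^∞ dx_n (∏_{j=1}^n V_{j-1}(x_j)) e^{σi(k(2Σ_{ℓ=0}^{n-1}(−1)^ℓ x_{n-ℓ}+(−1)^n b)−ηk)}`,
defined through the recursion coming from
`phase_{n+1}(b) = phase_n(x₁) + (−1)^n k (x₁ − b)`. -/
noncomputable def Wexp (k ηk σ : ℝ) : ℕ → (ℕ → ℝ → ℂ) → ℝ → ℂ
  | 0, _, b => Complex.exp ((σ : ℂ) * Complex.I * ((k * b - ηk : ℝ) : ℂ))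
  | m + 1, V, b =>
      ∫ x in Set.Ioi b,
        V 0 x *
          Complex.exp ((σ : ℂ) * (-1 : ℂ) ^ m * Complex.I * ((k * (x - b) : ℝ) : ℂ)) *
          Wexp k ηk σ m (fun j => V (j + 1)) x

/-- The kernel `W[V₀,…,V_{n-1}](b,k) = √(2/π) ∫_b^∞ dx₁ ⋯ ∫_{x_{n-1}}^∞ dx_n
(∏_{j=1}^n V_{j-1}(x_j)) sin(k(2Σ_{ℓ=0}^{n-1}(−1)^ℓ x_{n-ℓ} + (−1)^n b) − ηk)`,
expressed via `sin t = (2i)⁻¹(e^{it} − e^{−it})`. -/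
noncomputable def Wker (k ηk : ℝ) (n : ℕ) (V : ℕ → ℝ → ℂ) (b : ℝ) : ℂ :=
  (Real.sqrt (2 / Real.pi) : ℝ) * (2 * Complex.I)⁻¹ *
    (Wexp k ηk 1 n V b - Wexp k ηk (-1) n V b)

/-- The right-hand side of the change-of-variables identity:
`Rrec k ηk m V a b = ∫_a^∞ V₀((x+b)/2) Rrec k ηk (m-1) (shift V) b x dx`,
so that `Rrec k ηk n V x₀ x₀ = ∫_{x₀}^∞dx₁∫_{x₀}^∞dx₂∫_{x₁}^∞dx₃⋯∫_{x_{n-2}}^∞dx_n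
(∏_{j=1}^n V_{j-1}((x_j+x_{j-1})/2)) sin(k x_n − ηk)`. -/
noncomputable def Rrec (k ηk : ℝ) : ℕ → (ℕ → ℝ → ℂ) → ℝ → ℝ → ℂ
  | 0, _, _, b => ((Real.sin (k * b - ηk) : ℝ) : ℂ)
  | m + 1, V, a, b =>
      ∫ x in Set.Ioi a, V 0 ((x + b) / 2) * Rrec k ηk m (fun j => V (j + 1)) b x

/-!
Substituting `x = 2u - b` in the outermost integral of `Rrec` turns `V₀((x + b)/2)` into `V₀(u)`
and makes `u` the midpoint of the next pair of endpoints `(b, 2u - b)`, which is where the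
induction hypothesis is applied. Writing `sin t = (e^{it} - e^{-it})/(2i)`, each exponential
then reassembles into one step of the recursion of `Wexp`, once the base point of its phase is
moved from the midpoint to `b`. Every substitution contributes a Jacobian factor `2`.
-/

lemma norm_exp_sign_mul_I (σ : ℝ) (m : ℕ) (r : ℝ) :
    ‖Complex.exp (σ * (-1 : ℂ) ^ m * Complex.I * r)‖ = 1 := by
  rw [show (σ : ℂ) * (-1 : ℂ) ^ m * Complex.I * r = ((σ * (-1) ^ m * r : ℝ) : ℂ) * Complex.I by
    push_cast; ring]
  exact Complex.norm_exp_ofReal_mul_I _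

lemma integral_Ioi_eq_two_smul_integral_comp_two_mul_sub {E : Type*} [NormedAddCommGroup E]
    [NormedSpace ℝ E] (f : ℝ → E) (a b : ℝ) :
    ∫ x in Ioi a, f x = (2 : ℝ) • ∫ u in Ioi ((a + b) / 2), f (2 * u - b) := by
  have htrans : ∫ x in Ioi (a + b), f (x - b) = ∫ x in Ioi a, f x := by
    simpa using (measurePreserving_sub_right volume b).setIntegral_preimage_emb
      (measurableEmbedding_subRight b) f (Ioi a)
  rw [integral_comp_mul_left_Ioi (fun y => f (y - b)) _ two_pos, mul_div_cancel₀ _ two_ne_zero,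
    htrans, smul_inv_smul₀ two_ne_zero]

lemma integrableOn_Ioi_of_norm_le_one_add_rpow {E : Type*} [NormedAddCommGroup E] {f : ℝ → E}
    (hf : AEStronglyMeasurable f (volume.restrict (Ioi 0))) {C s : ℝ} (hs : 1 < s)
    (hC : ∀ x, 0 ≤ x → ‖f x‖ ≤ C * (1 + x) ^ (-s)) :
    IntegrableOn f (Ioi 0) := by
  refine (((integrable_one_add_norm (E := ℝ) (μ := volume) (by simpa using hs)).integrableOn
    (s := Ioi 0)).const_mul C).mono' hf (ae_restrict_of_forall_mem measurableSet_Ioi fun x hx => ?_)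
  have hx : 0 < x := hx
  simpa [abs_of_pos hx] using hC x hx.le

/-- `Wexp` with the phase of its outermost factor measured from `β` instead of from the lower
limit `c` of the outermost integral. -/
noncomputable def WexpRebased (k ηk σ : ℝ) (m : ℕ) (V : ℕ → ℝ → ℂ) (c β : ℝ) : ℂ :=
  Complex.exp (σ * (-1 : ℂ) ^ m * Complex.I * (k * (β - c) : ℝ)) * Wexp k ηk σ m V c

section

variable {k ηk σ : ℝ}

lemma WexpRebased_self (m : ℕ) (V : ℕ → ℝ → ℂ) (c : ℝ) :
    WexpRebased k ηk σ m V c c = Wexp k ηk σ m V c := by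
  simp [WexpRebased]

lemma Wexp_eq_exp_mul_WexpRebased (m : ℕ) (V : ℕ → ℝ → ℂ) (c β : ℝ) :
    Wexp k ηk σ m V c =
      Complex.exp (σ * (-1 : ℂ) ^ m * Complex.I * (k * (c - β) : ℝ)) *
        WexpRebased k ηk σ m V c β := by
  rw [WexpRebased, ← mul_assoc, ← Complex.exp_add]
  convert (one_mul _).symm
  convert Complex.exp_zero
  push_cast
  ring

lemma WexpRebased_succ (m : ℕ) (V : ℕ → ℝ → ℂ) (c β : ℝ) :
    WexpRebased k ηk σ (m + 1) V c β = ∫ x in Ioi c,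
      V 0 x * Complex.exp (σ * (-1 : ℂ) ^ m * Complex.I * (k * (x - β) : ℝ)) *
        Wexp k ηk σ m (fun j => V (j + 1)) x := by
  rw [WexpRebased, Wexp, ← integral_const_mul]
  congr 1
  funext x
  have hphase : Complex.exp (σ * (-1 : ℂ) ^ m * Complex.I * (k * (x - β) : ℝ)) =
      Complex.exp (σ * (-1 : ℂ) ^ (m + 1) * Complex.I * (k * (β - c) : ℝ)) *
        Complex.exp (σ * (-1 : ℂ) ^ m * Complex.I * (k * (x - c) : ℝ)) := by
    rw [← Complex.exp_add]
    congr 1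
    push_cast
    ring
  rw [hphase]
  ring

lemma norm_Wexp_le {m : ℕ} {V : ℕ → ℝ → ℂ} (hV : ∀ j < m, IntegrableOn (V j) (Ioi 0))
    {b : ℝ} (hb : 0 ≤ b) :
    ‖Wexp k ηk σ m V b‖ ≤ ∏ j ∈ Finset.range m, ∫ x in Ioi 0, ‖V j x‖ := by
  induction m generalizing V b with
  | zero => simpa [Wexp] using (norm_exp_sign_mul_I σ 0 (k * b - ηk)).le
  | succ m ih =>
    set B := ∏ j ∈ Finset.range m, ∫ x in Ioi 0, ‖V (j + 1) x‖
    have hV0 := hV 0 m.succ_pos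
    have hB : 0 ≤ B := Finset.prod_nonneg fun _ _ => integral_nonneg fun _ => norm_nonneg _
    rw [Finset.prod_range_succ', mul_comm]
    calc ‖Wexp k ηk σ (m + 1) V b‖ ≤ ∫ x in Ioi b, ‖V 0 x‖ * B := by
          refine (norm_integral_le_integral_norm _).trans (integral_mono_of_nonneg
            (ae_of_all _ fun _ => norm_nonneg _)
            ((hV0.mono_set (Ioi_subset_Ioi hb)).norm.mul_const _) ?_)
          filter_upwards [ae_restrict_mem measurableSet_Ioi] with x hx
          rw [norm_mul, norm_mul, norm_exp_sign_mul_I, mul_one]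
          exact mul_le_mul_of_nonneg_left
            (ih (fun j hj => hV _ (by omega)) (hb.trans hx.le)) (norm_nonneg _)
      _ ≤ (∫ x in Ioi 0, ‖V 0 x‖) * B := by
          rw [integral_mul_const]
          exact mul_le_mul_of_nonneg_right (setIntegral_mono_set hV0.norm
            (ae_of_all _ fun _ => norm_nonneg _) (Ioi_subset_Ioi hb).eventuallyLE) hB

lemma integrableOn_mul_exp_mul_Wexp {m : ℕ} {V : ℕ → ℝ → ℂ}
    (hV : ∀ j < m + 1, IntegrableOn (V j) (Ioi 0))
    (hW : ContinuousOn (Wexp k ηk σ m (fun j => V (j + 1))) (Ici 0)) (β : ℝ) {c : ℝ}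
    (hc : 0 ≤ c) :
    IntegrableOn (fun x => V 0 x * Complex.exp (σ * (-1 : ℂ) ^ m * Complex.I * (k * (x - β) : ℝ)) *
      Wexp k ηk σ m (fun j => V (j + 1)) x) (Ioi c) := by
  refine (((hV 0 m.succ_pos).mono_set (Ioi_subset_Ioi hc)).mul_bdd (c := 1)
    (Continuous.aestronglyMeasurable (by fun_prop)) ?_).mul_bdd
    (c := ∏ j ∈ Finset.range m, ∫ x in Ioi 0, ‖V (j + 1) x‖)
    ((hW.mono fun x hx => hc.trans (le_of_lt hx)).aestronglyMeasurable measurableSet_Ioi) ?_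
  · exact ae_of_all _ fun x => (norm_exp_sign_mul_I σ m _).le
  · filter_upwards [ae_restrict_mem measurableSet_Ioi] with x hx
    exact norm_Wexp_le (fun j hj => hV _ (by omega)) (hc.trans hx.le)

lemma continuousOn_Wexp {m : ℕ} {V : ℕ → ℝ → ℂ} (hV : ∀ j < m, IntegrableOn (V j) (Ioi 0)) :
    ContinuousOn (Wexp k ηk σ m V) (Ici 0) := by
  induction m generalizing V with
  | zero =>
    refine Continuous.continuousOn ?_
    change Continuous fun b : ℝ => Complex.exp _
    fun_prop
  | succ m ih =>
    have hW := ih (V := fun j => V (j + 1)) fun j hj => hV _ (by omega)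
    have hprim := (integrableOn_mul_exp_mul_Wexp hV hW 0 le_rfl).continuousOn_Ici_primitive_Ioi
    refine ((Continuous.continuousOn (f := fun c : ℝ =>
      Complex.exp (σ * (-1 : ℂ) ^ (m + 1) * Complex.I * (k * (c - 0) : ℝ))) (by fun_prop)).mul
      hprim).congr fun c _ => ?_
    rw [Wexp_eq_exp_mul_WexpRebased (m + 1) V c 0, WexpRebased_succ]
    rfl

end

lemma Rrec_eq_WexpRebased {k ηk : ℝ} {m : ℕ} {V : ℕ → ℝ → ℂ}
    (hV : ∀ j < m, IntegrableOn (V j) (Ioi 0)) {a b : ℝ} (ha : 0 ≤ a) (hb : 0 ≤ b) :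
    Rrec k ηk m V a b = 2 ^ m * (2 * Complex.I)⁻¹ *
      (WexpRebased k ηk 1 m V ((a + b) / 2) b - WexpRebased k ηk (-1) m V ((a + b) / 2) b) := by
  induction m generalizing V a b with
  | zero =>
    simp only [Rrec, WexpRebased, Wexp, pow_zero, one_mul, ← Complex.exp_add]
    rw [Complex.ofReal_sin, Complex.sin]
    push_cast
    field_simp
    ring_nf
    rw [Complex.I_sq]
    ring
  | succ m ih =>
    set c := (a + b) / 2 with hc_def
    have hc : 0 ≤ c := by positivity
    have hV' : ∀ j < m, IntegrableOn (V (j + 1)) (Ioi 0) := fun j hj => hV _ (by omega)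
    have hW' := fun σ => continuousOn_Wexp (k := k) (ηk := ηk) (σ := σ) hV'
    have hIH : EqOn
        (fun u => V 0 ((2 * u - b + b) / 2) * Rrec k ηk m (fun j => V (j + 1)) b (2 * u - b))
        (fun u => 2 ^ m * (2 * Complex.I)⁻¹ *
          (V 0 u * Complex.exp ((1 : ℝ) * (-1 : ℂ) ^ m * Complex.I * (k * (u - b) : ℝ)) *
              Wexp k ηk 1 m (fun j => V (j + 1)) u -
            V 0 u * Complex.exp ((-1 : ℝ) * (-1 : ℂ) ^ m * Complex.I * (k * (u - b) : ℝ)) *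
              Wexp k ηk (-1) m (fun j => V (j + 1)) u)) (Ioi c) := by
      intro u hu
      have hu : 0 ≤ 2 * u - b := by linarith [mem_Ioi.1 hu, hc_def]
      simp only [ih hV' hb hu, WexpRebased, show (b + (2 * u - b)) / 2 = u by ring,
        show (2 * u - b + b) / 2 = u by ring, show 2 * u - b - u = u - b by ring]
      ring
    rw [Rrec, integral_Ioi_eq_two_smul_integral_comp_two_mul_sub _ a b,
      setIntegral_congr_fun measurableSet_Ioi hIH, integral_const_mul,
      integral_sub (integrableOn_mul_exp_mul_Wexp hV (hW' 1) b hc)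
        (integrableOn_mul_exp_mul_Wexp hV (hW' (-1)) b hc),
      WexpRebased_succ, WexpRebased_succ, Complex.real_smul, Complex.ofReal_ofNat]
    ring

theorem W_change_of_variables_general
    (η : ℝ → ℝ)
    (n : ℕ) (V : ℕ → ℝ → ℂ)
    (hVmeas : ∀ j : ℕ, 1 ≤ j → j ≤ n → Measurable (V j))
    (hVbdd : ∀ j : ℕ, 1 ≤ j → j ≤ n → ∃ ε : ℝ, 0 < ε ∧ ∃ C : ℝ,
      ∀ x : ℝ, 0 ≤ x → ‖V j x‖ ≤ C * (1 + x) ^ (-(1 + ε))) :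
    ∀ x₀ : ℝ, 0 ≤ x₀ → ∀ k : ℝ, 0 < k →
      (2 : ℂ) ^ n * (Real.sqrt (Real.pi / 2) : ℝ) *
          Wker k (η k) n (fun i => V (i + 1)) x₀ =
        Rrec k (η k) n (fun i => V (i + 1)) x₀ x₀ := by
  intro x₀ hx₀ k _
  have hV : ∀ j < n, IntegrableOn (V (j + 1)) (Ioi 0) := fun j hj => by
    obtain ⟨ε, hε, C, hC⟩ := hVbdd (j + 1) (by omega) (by omega)
    exact integrableOn_Ioi_of_norm_le_one_add_rpow
      (hVmeas (j + 1) (by omega) (by omega)).aestronglyMeasurable (by linarith) hC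
  have hsqrt : ((Real.sqrt (Real.pi / 2) : ℝ) : ℂ) * (Real.sqrt (2 / Real.pi) : ℝ) = 1 := by
    rw [← Complex.ofReal_mul, ← Real.sqrt_mul (by positivity),
      show Real.pi / 2 * (2 / Real.pi) = 1 by field_simp, Real.sqrt_one, Complex.ofReal_one]
  rw [Rrec_eq_WexpRebased hV hx₀ hx₀, add_self_div_two, WexpRebased_self, WexpRebased_self, Wker]
  linear_combination (2 ^ n * (2 * Complex.I)⁻¹ * (Wexp k (η k) 1 n (fun i => V (i + 1)) x₀ -
    Wexp k (η k) (-1) n (fun i => V (i + 1)) x₀)) * hsqrt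

/-- Change of variables identity
`2^n √(π/2) W[V₁,…,V_n](x₀,k) = ∫_{x₀}^∞dx₁∫_{x₀}^∞dx₂∫_{x₁}^∞dx₃⋯∫_{x_{n-2}}^∞dx_n
(∏_{j=1}^n V_j((x_j+x_{j-1})/2)) sin(k x_n − η(k))` for `n ≥ 3`. -/
theorem W_change_of_variables
    (v : ℝ → ℝ) (hv_meas : Measurable v) (C₀ ρ : ℝ)
    (hC₀ : 0 < C₀) (hρ : 2 < ρ)
    (hv : ∀ x : ℝ, 0 ≤ x → |v x| ≤ C₀ * (1 + x) ^ (-ρ))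
    (θ : ℝ → ℝ → ℂ)
    (hθcont : ∀ k : ℝ, k ≠ 0 → ContinuousOn (θ k) (Set.Ici 0))
    (hθbdd : ∀ k : ℝ, k ≠ 0 → ∃ M : ℝ, ∀ x : ℝ, 0 ≤ x → ‖θ k x‖ ≤ M)
    (hθeq : ∀ k : ℝ, k ≠ 0 → ∀ x : ℝ, 0 ≤ x →
      θ k x = Complex.exp (Complex.I * k * x) +
        (k : ℂ)⁻¹ * ∫ y in Set.Ioi x,
          Complex.sin ((k : ℂ) * ((x : ℂ) - (y : ℂ))) * (v y : ℂ) * θ k y)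
    (η : ℝ → ℝ)
    (hηcont : ContinuousOn η (Set.Ioi 0))
    (hηlim : Tendsto η atTop (nhds 0))
    (hηeq : ∀ k : ℝ, 0 < k →
      θ k 0 = ((‖θ k 0‖ : ℝ) : ℂ) * Complex.exp (Complex.I * η k))
    (n : ℕ) (hn : 3 ≤ n) (V : ℕ → ℝ → ℂ)
    (hVmeas : ∀ j : ℕ, 1 ≤ j → j ≤ n → Measurable (V j))
    (hVbdd : ∀ j : ℕ, 1 ≤ j → j ≤ n → ∃ ε : ℝ, 0 < ε ∧ ∃ C : ℝ,
      ∀ x : ℝ, 0 ≤ x → ‖V j x‖ ≤ C * (1 + x) ^ (-(1 + ε))) :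
    ∀ x₀ : ℝ, 0 ≤ x₀ → ∀ k : ℝ, 0 < k →
      (2 : ℂ) ^ n * (Real.sqrt (Real.pi / 2) : ℝ) *
          Wker k (η k) n (fun i => V (i + 1)) x₀ =
        Rrec k (η k) n (fun i => V (i + 1)) x₀ x₀ :=
  W_change_of_variables_general η n V hVmeas hVbdd
end

section
/- Let n ≥ 1, ε > 0, and V₁,…,V_n ∈ L^∞_{1+ε}(ℝ₊). Then there exists C > 0 such that |U[V₁,…,V_n](x,y)| ≤ C (1+x)^{−(1+ε)/2−(n−1)ε} (1+y)^{−(1+ε)/2} Y(y−x) for all x, y ≥ 0, where Y is the Heaviside function; consequently U[V₁,…,V_n] ∈ L²((0,∞)×(0,∞)). -/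
open MeasureTheory Set

/-- The Heaviside function on `ℝ`. -/
noncomputable def Heaviside (t : ℝ) : ℝ := if 0 ≤ t then 1 else 0

/-- Recursive encoding of the nested integral kernel `U`: with the pair of
running parameters `(a, b) = (x_{j-2}, x_{j-1})`,
`Urec m V a b y = ∫_a^∞ V₀((x+b)/2) Urec (m-1) (shift V) b x y dx` and
`Urec 0 V a b y = V₀((y+b)/2) Y(y−a)`, so that `2^n U[V₁,…,V_n](x₀,x_n)
= Urec (n-1) V x₀ x₀ x_n` reproduces
`∫_{x₀}^∞dx₁∫_{x₀}^∞dx₂∫_{x₁}^∞dx₃⋯∫_{x_{n-3}}^∞dx_{n-1}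
(∏_{j=1}^n V_j((x_j+x_{j-1})/2)) Y(x_n−x_{n-2})`. -/
noncomputable def Urec : ℕ → (ℕ → ℝ → ℂ) → ℝ → ℝ → ℝ → ℂ
  | 0, V, a, b, y => V 0 ((y + b) / 2) * (Heaviside (y - a) : ℝ)
  | m + 1, V, a, b, y =>
      ∫ x in Set.Ioi a, V 0 ((x + b) / 2) * Urec m (fun j => V (j + 1)) b x y

/-!
Write `α = -(1+ε)/2`. By AM–GM, `(1 + (x+b)/2)^{-(1+ε)} ≤ (1+x)^α (1+b)^α`, so the decay of
each potential `V_j((x_j + x_{j-1})/2)` splits evenly between the two endpoints. In the recursion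
`Urec (m+1) W a b y = ∫_a^∞ W₀((x+b)/2) Urec m (W ∘ succ) b x y dx`, the half of the new factor
that sits on the integration variable `x` meets the factor `(1+x)^α` of the inductive bound,
leaving the integrable weight `(1+x)^{-(1+ε)}`, whose integral over `(a,∞)` is `(1+a)^{-ε}/ε`.
Thus every integration gains a factor `(1 + min a b)^{-ε}`, and
`|Urec m W a b y| ≲ (1+b)^α (1 + min a b)^{-mε} (1+y)^α`. On the diagonal `a = b = x` this is a
product of functions of `x` and of `y` with exponents below `-1/2`, hence square integrable.
-/

lemma integrableOn_Ioi_one_add_rpow {p : ℝ} (hp : p < -1) {a : ℝ} (ha : -1 < a) :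
    IntegrableOn (fun x : ℝ => (1 + x) ^ p) (Ioi a) := by
  have h := integrableOn_Ioi_rpow_of_lt hp (show 0 < 1 + a by linarith)
  rwa [← image_const_add_Ioi, (measurePreserving_add_left volume (1 : ℝ)).integrableOn_image
    (measurableEmbedding_addLeft 1)] at h

lemma integral_Ioi_one_add_rpow {p : ℝ} (hp : p < -1) {a : ℝ} (ha : -1 < a) :
    ∫ x in Ioi a, (1 + x) ^ p = -(1 + a) ^ (p + 1) / (p + 1) := by
  rw [← integral_Ioi_rpow_of_lt hp (show 0 < 1 + a by linarith), ← image_const_add_Ioi,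
    (measurePreserving_add_left volume (1 : ℝ)).setIntegral_image_emb
    (measurableEmbedding_addLeft 1)]

lemma norm_setIntegral_Ioi_le_of_norm_le_one_add_rpow {E : Type*} [NormedAddCommGroup E]
    [NormedSpace ℝ E] {f : ℝ → E} {ε a D : ℝ} (hε : 0 < ε) (ha : -1 < a)
    (hf : ∀ x ∈ Ioi a, ‖f x‖ ≤ D * (1 + x) ^ (-(1 + ε))) :
    ‖∫ x in Ioi a, f x‖ ≤ D * (1 + a) ^ (-ε) / ε := by
  have hp : -(1 + ε) < -1 := by linarith
  calc ‖∫ x in Ioi a, f x‖ ≤ ∫ x in Ioi a, D * (1 + x) ^ (-(1 + ε)) :=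
        norm_integral_le_of_norm_le ((integrableOn_Ioi_one_add_rpow hp ha).const_mul D)
          ((ae_restrict_mem measurableSet_Ioi).mono hf)
    _ = D * (1 + a) ^ (-ε) / ε := by
        rw [integral_const_mul, integral_Ioi_one_add_rpow hp ha, show -(1 + ε) + 1 = -ε by ring]
        ring

lemma memLp_two_one_add_rpow {p : ℝ} (hp : p < -(1 / 2)) :
    MemLp (fun x : ℝ => (1 + x) ^ p) 2 (volume.restrict (Ioi 0)) := by
  have hmeas : Measurable fun x : ℝ => (1 + x) ^ p := by fun_prop
  rw [memLp_two_iff_integrable_sq_norm hmeas.aestronglyMeasurable]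
  refine (integrableOn_Ioi_one_add_rpow (p := 2 * p) (by linarith) (by norm_num)).congr_fun
    (fun x hx => ?_) measurableSet_Ioi
  have hx : (0 : ℝ) ≤ 1 + x := by linarith [mem_Ioi.mp hx]
  rw [Real.norm_of_nonneg (Real.rpow_nonneg hx p), ← Real.rpow_natCast, ← Real.rpow_mul hx,
    Nat.cast_ofNat, mul_comm]

lemma MeasureTheory.MemLp.mul_prod_two {α β : Type*} [MeasurableSpace α] [MeasurableSpace β]
    {μ : Measure α} {ν : Measure β} [SFinite ν] {f : α → ℝ} {g : β → ℝ} (hf : MemLp f 2 μ)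
    (hg : MemLp g 2 ν) :
    MemLp (fun z : α × β => f z.1 * g z.2) 2 (μ.prod ν) := by
  have hmeas : AEStronglyMeasurable (fun z : α × β => f z.1 * g z.2) (μ.prod ν) :=
    hf.1.comp_fst.mul hg.1.comp_snd
  rw [memLp_two_iff_integrable_sq_norm hmeas]
  rw [memLp_two_iff_integrable_sq_norm hf.1] at hf
  rw [memLp_two_iff_integrable_sq_norm hg.1] at hg
  simpa only [norm_mul, mul_pow] using hf.mul_prod hg

lemma memLp_two_of_norm_le_one_add_rpow_mul {E : Type*} [NormedAddCommGroup E] {f : ℝ × ℝ → E}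
    {C p q : ℝ} (hp : p < -(1 / 2)) (hq : q < -(1 / 2))
    (hf : AEStronglyMeasurable f (volume.restrict (Ioi 0 ×ˢ Ioi 0)))
    (hbound : ∀ x y : ℝ, 0 < x → 0 < y → ‖f (x, y)‖ ≤ C * (1 + x) ^ p * (1 + y) ^ q) :
    MemLp f 2 (volume.restrict (Ioi 0 ×ˢ Ioi 0)) := by
  have hg : MemLp (fun z : ℝ × ℝ => C * (1 + z.1) ^ p * (1 + z.2) ^ q) 2
      (volume.restrict (Ioi 0 ×ˢ Ioi 0)) := by
    rw [Measure.volume_eq_prod, ← Measure.prod_restrict]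
    exact ((memLp_two_one_add_rpow hp).const_mul C).mul_prod_two (memLp_two_one_add_rpow hq)
  refine hg.mono' hf ((ae_restrict_mem (measurableSet_Ioi.prod measurableSet_Ioi)).mono ?_)
  rintro ⟨x, y⟩ ⟨hx, hy⟩
  exact hbound x y hx hy

lemma exists_pos_norm_le_mul {α E : Type*} [Norm E] {f : α → E} {g : α → ℝ} {s : Set α}
    (hg : ∀ x ∈ s, 0 ≤ g x) (h : ∃ C, ∀ x ∈ s, ‖f x‖ ≤ C * g x) :
    ∃ C > 0, ∀ x ∈ s, ‖f x‖ ≤ C * g x := by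
  obtain ⟨C, hC⟩ := h
  exact ⟨max C 1, by positivity, fun x hx =>
    (hC x hx).trans (mul_le_mul_of_nonneg_right (le_max_left C 1) (hg x hx))⟩

lemma one_add_midpoint_rpow_neg_le {s x y : ℝ} (hs : 0 ≤ s) (hx : -1 < x) (hy : -1 < y) :
    (1 + (x + y) / 2) ^ (-s) ≤ (1 + x) ^ (-(s / 2)) * (1 + y) ^ (-(s / 2)) := by
  have hx' : 0 < 1 + x := by linarith
  have hy' : 0 < 1 + y := by linarith
  have hm : 0 < 1 + (x + y) / 2 := by linarith
  have amgm : (1 + x) * (1 + y) ≤ (1 + (x + y) / 2) ^ (2 : ℝ) := by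
    rw [Real.rpow_two]; nlinarith [sq_nonneg (x - y)]
  calc (1 + (x + y) / 2) ^ (-s) = ((1 + (x + y) / 2) ^ (2 : ℝ)) ^ (-(s / 2)) := by
        rw [← Real.rpow_mul hm.le]; ring_nf
    _ ≤ ((1 + x) * (1 + y)) ^ (-(s / 2)) :=
        Real.rpow_le_rpow_of_nonpos (by positivity) amgm (by linarith)
    _ = (1 + x) ^ (-(s / 2)) * (1 + y) ^ (-(s / 2)) := Real.mul_rpow hx'.le hy'.le

lemma heaviside_nonneg (t : ℝ) : 0 ≤ Heaviside t := by
  unfold Heaviside; split_ifs <;> norm_num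

lemma heaviside_le_one (t : ℝ) : Heaviside t ≤ 1 := by
  unfold Heaviside; split_ifs <;> norm_num

lemma heaviside_of_nonneg {t : ℝ} (h : 0 ≤ t) : Heaviside t = 1 := if_pos h

lemma heaviside_of_neg {t : ℝ} (h : t < 0) : Heaviside t = 0 := if_neg h.not_ge

lemma measurable_heaviside : Measurable Heaviside :=
  Measurable.ite measurableSet_Ici measurable_const measurable_const

lemma urec_eq_zero_of_lt_min (m : ℕ) (W : ℕ → ℝ → ℂ) {a b y : ℝ} (hy : y < min a b) :
    Urec m W a b y = 0 := by
  induction m generalizing W a b with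
  | zero => simp [Urec, heaviside_of_neg (sub_neg.mpr (hy.trans_le (min_le_left a b)))]
  | succ m ih =>
    rw [Urec, ← integral_zero ℝ ℂ]
    refine setIntegral_congr_fun measurableSet_Ioi fun x hx => ?_
    have hya : y < a := hy.trans_le (min_le_left a b)
    rw [ih _ (lt_min (hy.trans_le (min_le_right a b)) (hya.trans hx)), mul_zero]

lemma measurable_urec (m : ℕ) (W : ℕ → ℝ → ℂ) (hW : ∀ j ≤ m, Measurable (W j)) :
    Measurable fun p : ℝ × ℝ × ℝ => Urec m W p.1 p.2.1 p.2.2 := by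
  induction m generalizing W with
  | zero =>
    simp only [Urec]
    exact ((hW 0 le_rfl).comp (by fun_prop)).mul
      (Complex.measurable_ofReal.comp (measurable_heaviside.comp (by fun_prop)))
  | succ m ih =>
    have hU := ih (fun j => W (j + 1)) fun j hj => hW (j + 1) (by omega)
    have hintegrand : Measurable fun q : (ℝ × ℝ × ℝ) × ℝ =>
        if q.1.1 < q.2 then W 0 ((q.2 + q.1.2.1) / 2) *
          Urec m (fun j => W (j + 1)) q.1.2.1 q.2 q.1.2.2 else 0 :=
      Measurable.ite (measurableSet_lt (by fun_prop) (by fun_prop))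
        (((hW 0 (Nat.zero_le _)).comp (by fun_prop)).mul
          (hU.comp (f := fun q : (ℝ × ℝ × ℝ) × ℝ => (q.1.2.1, q.2, q.1.2.2)) (by fun_prop)))
        measurable_const
    simp only [Urec, ← integral_indicator measurableSet_Ioi, indicator_apply, mem_Ioi]
    exact hintegrand.stronglyMeasurable.integral_prod_right'.measurable

lemma norm_urec_zero_le {W : ℕ → ℝ → ℂ} {s C₀ : ℝ} (hs : 0 ≤ s) (hC₀ : 0 ≤ C₀)
    (hW₀ : ∀ x, 0 ≤ x → ‖W 0 x‖ ≤ C₀ * (1 + x) ^ (-s)) (a : ℝ) {b y : ℝ} (hb : 0 ≤ b)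
    (hy : 0 ≤ y) :
    ‖Urec 0 W a b y‖ ≤ C₀ * (1 + b) ^ (-(s / 2)) * (1 + y) ^ (-(s / 2)) :=
  calc ‖Urec 0 W a b y‖ = ‖W 0 ((y + b) / 2)‖ * Heaviside (y - a) := by
        rw [Urec, norm_mul, Complex.norm_real, Real.norm_of_nonneg (heaviside_nonneg _)]
    _ ≤ ‖W 0 ((y + b) / 2)‖ :=
        mul_le_of_le_one_right (norm_nonneg _) (heaviside_le_one _)
    _ ≤ C₀ * (1 + (y + b) / 2) ^ (-s) := hW₀ _ (by positivity)
    _ ≤ C₀ * ((1 + y) ^ (-(s / 2)) * (1 + b) ^ (-(s / 2))) := by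
        gcongr; exact one_add_midpoint_rpow_neg_le hs (by linarith) (by linarith)
    _ = C₀ * (1 + b) ^ (-(s / 2)) * (1 + y) ^ (-(s / 2)) := by ring

lemma norm_urec_succ_le {m : ℕ} {W : ℕ → ℝ → ℂ} {ε C₀ C : ℝ} (hε : 0 < ε) (hC₀ : 0 ≤ C₀)
    (hC : 0 ≤ C) (hW₀ : ∀ x, 0 ≤ x → ‖W 0 x‖ ≤ C₀ * (1 + x) ^ (-(1 + ε)))
    (hU : ∀ a b y, 0 ≤ a → 0 ≤ b → 0 ≤ y → ‖Urec m (fun j => W (j + 1)) a b y‖ ≤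
      C * (1 + b) ^ (-((1 + ε) / 2)) * (1 + min a b) ^ (-(m * ε)) * (1 + y) ^ (-((1 + ε) / 2)))
    {a b y : ℝ} (ha : 0 ≤ a) (hb : 0 ≤ b) (hy : 0 ≤ y) :
    ‖Urec (m + 1) W a b y‖ ≤ C₀ * C / ε * (1 + b) ^ (-((1 + ε) / 2)) *
      (1 + min a b) ^ (-((m + 1 : ℕ) * ε)) * (1 + y) ^ (-((1 + ε) / 2)) := by
  set α : ℝ := -((1 + ε) / 2)
  have hmin : 0 < 1 + min a b := by have := le_min ha hb; linarith
  set D := C₀ * C * (1 + b) ^ α * (1 + min a b) ^ (-(m * ε)) * (1 + y) ^ α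
  have hD : 0 ≤ D := by positivity
  have hintegrand : ∀ x ∈ Ioi a, ‖W 0 ((x + b) / 2) * Urec m (fun j => W (j + 1)) b x y‖ ≤
      D * (1 + x) ^ (-(1 + ε)) := by
    intro x hx
    have hx₀ : 0 ≤ x := ha.trans (le_of_lt hx)
    have hW : ‖W 0 ((x + b) / 2)‖ ≤ C₀ * ((1 + x) ^ α * (1 + b) ^ α) :=
      (hW₀ _ (by positivity)).trans (by
        gcongr; exact one_add_midpoint_rpow_neg_le (by linarith) (by linarith) (by linarith))
    have hmono : (1 + min b x) ^ (-(m * ε)) ≤ (1 + min a b) ^ (-(m * ε)) :=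
      Real.rpow_le_rpow_of_nonpos hmin
        (add_le_add_right (le_min (min_le_right a b) ((min_le_left a b).trans (le_of_lt hx))) 1)
        (neg_nonpos.mpr (by positivity))
    have hUx : ‖Urec m (fun j => W (j + 1)) b x y‖ ≤
        C * (1 + x) ^ α * (1 + min a b) ^ (-(m * ε)) * (1 + y) ^ α :=
      (hU b x y hb hx₀ hy).trans (by gcongr)
    calc ‖W 0 ((x + b) / 2) * Urec m (fun j => W (j + 1)) b x y‖
        ≤ C₀ * ((1 + x) ^ α * (1 + b) ^ α) *
            (C * (1 + x) ^ α * (1 + min a b) ^ (-(m * ε)) * (1 + y) ^ α) := by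
          rw [norm_mul]; exact mul_le_mul hW hUx (norm_nonneg _) (by positivity)
      _ = D * ((1 + x) ^ α * (1 + x) ^ α) := by ring
      _ = D * (1 + x) ^ (-(1 + ε)) := by
          rw [← Real.rpow_add (by linarith)]; congr 2; ring
  calc ‖Urec (m + 1) W a b y‖ ≤ D * (1 + a) ^ (-ε) / ε :=
        norm_setIntegral_Ioi_le_of_norm_le_one_add_rpow hε (by linarith) hintegrand
    _ ≤ D * (1 + min a b) ^ (-ε) / ε := by
        gcongr D * ?_ / ε
        exact Real.rpow_le_rpow_of_nonpos hmin (by simp) (by linarith)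
    _ = _ := by
        rw [show -(((m + 1 : ℕ) : ℝ) * ε) = -(m * ε) + -ε by push_cast; ring,
          Real.rpow_add hmin]
        ring

lemma norm_urec_le {ε : ℝ} (hε : 0 < ε) (m : ℕ) (W : ℕ → ℝ → ℂ)
    (hW : ∀ j ≤ m, ∃ C > 0, ∀ x, 0 ≤ x → ‖W j x‖ ≤ C * (1 + x) ^ (-(1 + ε))) :
    ∃ C > 0, ∀ a b y, 0 ≤ a → 0 ≤ b → 0 ≤ y → ‖Urec m W a b y‖ ≤ C * (1 + b) ^ (-((1 + ε) / 2)) *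
      (1 + min a b) ^ (-(m * ε)) * (1 + y) ^ (-((1 + ε) / 2)) := by
  induction m generalizing W with
  | zero =>
    obtain ⟨C₀, hC₀, hW₀⟩ := hW 0 le_rfl
    refine ⟨C₀, hC₀, fun a b y _ hb hy => ?_⟩
    simpa using norm_urec_zero_le (by linarith) hC₀.le hW₀ a hb hy
  | succ m ih =>
    obtain ⟨C₀, hC₀, hW₀⟩ := hW 0 (Nat.zero_le _)
    obtain ⟨C, hC, hU⟩ := ih (fun j => W (j + 1)) fun j hj => hW (j + 1) (by omega)
    exact ⟨C₀ * C / ε, by positivity, fun a b y ha hb hy =>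
      norm_urec_succ_le hε hC₀.le hC.le hW₀ hU ha hb hy⟩

lemma norm_urec_diag_le {ε : ℝ} (hε : 0 < ε) (m : ℕ) (W : ℕ → ℝ → ℂ)
    (hW : ∀ j ≤ m, ∃ C > 0, ∀ x, 0 ≤ x → ‖W j x‖ ≤ C * (1 + x) ^ (-(1 + ε))) :
    ∃ C > 0, ∀ x y, 0 ≤ x → 0 ≤ y → ‖Urec m W x x y‖ ≤
      C * (1 + x) ^ (-((1 + ε) / 2) - m * ε) * (1 + y) ^ (-((1 + ε) / 2)) * Heaviside (y - x) := by
  obtain ⟨C, hC, hU⟩ := norm_urec_le hε m W hW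
  refine ⟨C, hC, fun x y hx hy => ?_⟩
  rcases lt_or_ge y x with hyx | hxy
  · rw [urec_eq_zero_of_lt_min m W (by rwa [min_self]), heaviside_of_neg (by linarith)]
    simp
  · rw [heaviside_of_nonneg (by linarith), mul_one, sub_eq_add_neg,
      Real.rpow_add (by linarith)]
    simpa only [min_self, mul_assoc] using hU x x y hx hx hy

/-- Pointwise bound for the kernel `U[V₁,…,V_n]` and the resulting
Hilbert-Schmidt (i.e. `L²`) property. -/
theorem U_kernel_estimate_and_L2
    (n : ℕ) (hn : 1 ≤ n) (ε : ℝ) (hε : 0 < ε) (V : ℕ → ℝ → ℂ)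
    (hVmeas : ∀ j : ℕ, 1 ≤ j → j ≤ n → Measurable (V j))
    (hVbdd : ∀ j : ℕ, 1 ≤ j → j ≤ n → ∃ C : ℝ,
      ∀ x : ℝ, 0 ≤ x → ‖V j x‖ ≤ C * (1 + x) ^ (-(1 + ε))) :
    (∃ C : ℝ, 0 < C ∧ ∀ x : ℝ, 0 ≤ x → ∀ y : ℝ, 0 ≤ y →
      ‖((2 : ℂ) ^ n)⁻¹ * Urec (n - 1) (fun i => V (i + 1)) x x y‖ ≤
        C * (1 + x) ^ (-((1 + ε) / 2) - ((n : ℝ) - 1) * ε) *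
          (1 + y) ^ (-((1 + ε) / 2)) * Heaviside (y - x)) ∧
    MemLp (fun q : ℝ × ℝ =>
        ((2 : ℂ) ^ n)⁻¹ * Urec (n - 1) (fun i => V (i + 1)) q.1 q.1 q.2) 2
      (volume.restrict (Set.Ioi (0:ℝ) ×ˢ Set.Ioi (0:ℝ))) := by
  have hW (j : ℕ) (hj : j ≤ n - 1) : ∃ C > 0, ∀ x, 0 ≤ x →
      ‖V (j + 1) x‖ ≤ C * (1 + x) ^ (-(1 + ε)) :=
    exists_pos_norm_le_mul (s := Ici 0)
      (fun x hx => Real.rpow_nonneg (by linarith [mem_Ici.mp hx]) _)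
      (hVbdd (j + 1) (by omega) (by omega))
  obtain ⟨C, hC, hU⟩ := norm_urec_diag_le hε (n - 1) _ hW
  rw [Nat.cast_sub hn, Nat.cast_one] at hU
  have h2n : ‖((2 : ℂ) ^ n)⁻¹‖ ≤ 1 := by
    rw [norm_inv, norm_pow, Complex.norm_two]
    exact inv_le_one_of_one_le₀ (one_le_pow₀ one_le_two)
  have hbound (x : ℝ) (hx : 0 ≤ x) (y : ℝ) (hy : 0 ≤ y) :=
    (norm_mul_le_of_le h2n le_rfl).trans ((one_mul _).trans_le (hU x y hx hy))
  have hmeas : Measurable fun q : ℝ × ℝ =>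
      ((2 : ℂ) ^ n)⁻¹ * Urec (n - 1) (fun i => V (i + 1)) q.1 q.1 q.2 :=
    measurable_const.mul ((measurable_urec (n - 1) _ fun j hj =>
      hVmeas (j + 1) (by omega) (by omega)).comp
        (f := fun q : ℝ × ℝ => (q.1, q.1, q.2)) (by fun_prop))
  refine ⟨⟨C, hC, hbound⟩, memLp_two_of_norm_le_one_add_rpow_mul ?_ ?_
    hmeas.aestronglyMeasurable fun x y hx hy => (hbound x hx.le y hy.le).trans
      (mul_le_of_le_one_right (by positivity) (heaviside_le_one _))⟩
  · nlinarith [(Nat.one_le_cast (α := ℝ)).mpr hn]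
  · linarith
end

section
/- Let u, V : [0,∞) → ℂ be measurable with |u(x)| ≤ C(1+x)^{−2−ε} and |V(x)| ≤ C(1+x)^{−1−ε} for some C, ε > 0, and set V_u(x) := ∫ₓ^∞ u(y) dy. Then for all x₀ ≥ 0 and k > 0, ∫_{x₀}^∞ (sin(k(x₁−x₀))/k) u(x₁) W[V](x₁,k) dx₁ = W[V_u, V](x₀,k) − W[V_u ⋆ V](x₀,k). -/
open MeasureTheory Set Filter

/-!
Since `u = -V_u'`, the identity is an integration by parts. Put the
`V`-variable `b` outermost in every term (Fubini on the triangles `x₀ < x < b`). For each fixed `b`,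
the identity then reduces to an integration by parts on `(x₀, b)` against
`φ(z) = sin (k (z - x₀)) / k · sin (k (2b - z) - η)`. Its `z`-derivative is the phase
`sin (k (2b - 2z + x₀) - η)` of `W[V_u, V]`. Its value at `z = b` is
`∫_{x₀}^b sin (k (2x - x₀) - η) dx`, which yields the `W[V_u ⋆ V]` term. Because `u` is only
measurable, this integration by parts is itself carried out by Fubini on `x₀ < x < z`.
-/

section Decay

variable {E : Type*} [NormedAddCommGroup E] {p t : ℝ}

lemma integrableOn_one_add_rpow_neg (hp : 1 < p) (ht : -1 < t) :
    IntegrableOn (fun x : ℝ => (1 + x) ^ (-p)) (Ioi t) := by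
  simpa only [add_comm] using
    integrableOn_add_rpow_Ioi_of_lt (m := 1) (by linarith : -p < -1) ht

lemma integral_Ioi_one_add_rpow_neg (hp : 1 < p) (ht : -1 < t) :
    ∫ x in Ioi t, (1 + x) ^ (-p) = (1 + t) ^ (1 - p) / (p - 1) := by
  have hderiv : ∀ x ∈ Ici t, HasDerivAt (fun z : ℝ => -(1 + z) ^ (1 - p) / (p - 1))
      ((1 + x) ^ (-p)) x := by
    intro x hx
    have h1x : 0 < 1 + x := by linarith [mem_Ici.1 hx]
    have h : HasDerivAt (fun z : ℝ => (1 + z) ^ (1 - p))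
        ((1 - p) * (1 + x) ^ (1 - p - 1) * 1) x :=
      (Real.hasDerivAt_rpow_const (Or.inl h1x.ne')).comp x ((hasDerivAt_id x).const_add 1)
    have h' : HasDerivAt (fun z : ℝ => -(1 + z) ^ (1 - p) / (p - 1))
        (-((1 - p) * (1 + x) ^ (1 - p - 1) * 1) / (p - 1)) x := h.neg.div_const (p - 1)
    convert h' using 1
    rw [show 1 - p - 1 = -p by ring]
    field_simp [(by linarith : p - 1 ≠ 0)]
    ring
  have hlim : Tendsto (fun z : ℝ => -(1 + z) ^ (1 - p) / (p - 1)) atTop (nhds 0) := by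
    have := ((tendsto_rpow_neg_atTop (by linarith : 0 < p - 1)).comp
      (tendsto_atTop_add_const_left _ 1 tendsto_id)).neg.div_const (p - 1)
    simpa [Function.comp_def] using this
  rw [integral_Ioi_of_hasDerivAt_of_tendsto
    (hderiv t self_mem_Ici).continuousAt.continuousWithinAt
    (fun x hx => hderiv x (mem_Ici_of_Ioi hx)) (integrableOn_one_add_rpow_neg hp ht) hlim]
  ring

lemma antitoneOn_mul_one_add_rpow_neg {C : ℝ} (hC : 0 ≤ C) (hp : 0 ≤ p) :
    AntitoneOn (fun x : ℝ => C * (1 + x) ^ (-p)) (Ioi (-1)) := fun x hx _ _ hxy =>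
  mul_le_mul_of_nonneg_left
    (Real.rpow_le_rpow_of_nonpos (by linarith [mem_Ioi.1 hx]) (by linarith) (by linarith)) hC

lemma integrableOn_Ioi_of_norm_le_rpow {f : ℝ → E} {C : ℝ} (hp : 1 < p) (ht : 0 ≤ t)
    (hf : AEStronglyMeasurable f (volume.restrict (Ioi t)))
    (hb : ∀ x, 0 ≤ x → ‖f x‖ ≤ C * (1 + x) ^ (-p)) :
    IntegrableOn f (Ioi t) :=
  Integrable.mono' ((integrableOn_one_add_rpow_neg hp (by linarith)).const_mul C) hf <|
    ae_restrict_of_forall_mem measurableSet_Ioi fun x hx => hb x (ht.trans hx.out.le)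

lemma norm_integral_Ioi_le_of_norm_le_rpow [NormedSpace ℝ E] {f : ℝ → E} {C : ℝ} (hp : 1 < p)
    (ht : 0 ≤ t)
    (hb : ∀ x, 0 ≤ x → ‖f x‖ ≤ C * (1 + x) ^ (-p)) :
    ‖∫ x in Ioi t, f x‖ ≤ C / (p - 1) * (1 + t) ^ (1 - p) :=
  calc ‖∫ x in Ioi t, f x‖ ≤ ∫ x in Ioi t, C * (1 + x) ^ (-p) :=
        norm_integral_le_of_norm_le ((integrableOn_one_add_rpow_neg hp (by linarith)).const_mul C)
          (ae_restrict_of_forall_mem measurableSet_Ioi fun x hx => hb x (ht.trans hx.out.le))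
    _ = C / (p - 1) * (1 + t) ^ (1 - p) := by
        rw [integral_const_mul, integral_Ioi_one_add_rpow_neg hp (by linarith)]
        ring

lemma stronglyMeasurable_integral_Ioi [NormedSpace ℝ E] {f : ℝ → E} (hf : StronglyMeasurable f) :
    StronglyMeasurable fun x => ∫ y in Ioi x, f y := by
  have h : (fun x => ∫ y in Ioi x, f y) =
      fun x => ∫ y, {q : ℝ × ℝ | q.1 < q.2}.indicator (fun q => f q.2) (x, y) := by
    funext x
    rw [← integral_indicator measurableSet_Ioi]
    rfl
  rw [h]
  exact ((hf.comp_measurable measurable_snd).indicator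
    (measurableSet_lt measurable_fst measurable_snd)).integral_prod_right'

end Decay

section TriangleFubini

variable {E : Type*} [NormedAddCommGroup E] {s : Set ℝ} {a : ℝ}
  {F : ℝ → ℝ → E} {g h : ℝ → ℝ}

lemma integrable_indicator_lt_of_norm_le_mul (hs : MeasurableSet s)
    (hF : AEStronglyMeasurable (fun p : ℝ × ℝ => F p.1 p.2)
      ((volume.restrict s).prod (volume.restrict (Ioi a))))
    (hg : IntegrableOn g s) (hh : IntegrableOn h (Ioi a))
    (hbd : ∀ x ∈ s, ∀ y, x < y → ‖F x y‖ ≤ g x * h y) :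
    Integrable ({p : ℝ × ℝ | p.1 < p.2}.indicator fun p => F p.1 p.2)
      ((volume.restrict s).prod (volume.restrict (Ioi a))) := by
  refine Integrable.mono' (hg.norm.mul_prod hh.norm)
    (hF.indicator (measurableSet_lt measurable_fst measurable_snd)) ?_
  rw [Measure.prod_restrict]
  refine (ae_restrict_iff' (hs.prod measurableSet_Ioi)).2 (ae_of_all _ fun p hp => ?_)
  by_cases hlt : p.1 < p.2
  · rw [indicator_of_mem (s := {p : ℝ × ℝ | p.1 < p.2}) hlt, Real.norm_eq_abs, Real.norm_eq_abs,
      ← abs_mul]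
    exact (hbd _ hp.1 _ hlt).trans (le_abs_self _)
  · rw [indicator_of_notMem (s := {p : ℝ × ℝ | p.1 < p.2}) hlt, norm_zero]
    positivity

lemma setIntegral_indicator_lt_left [NormedSpace ℝ E] {x : ℝ} (hx : a ≤ x) :
    ∫ y in Ioi a, {p : ℝ × ℝ | p.1 < p.2}.indicator (fun p => F p.1 p.2) (x, y) =
      ∫ y in Ioi x, F x y := by
  rw [← integral_indicator measurableSet_Ioi, ← integral_indicator measurableSet_Ioi]
  congr 1 with y
  by_cases hxy : x < y
  · simp [hxy, hx.trans_lt hxy]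
  · simp [hxy]

lemma setIntegral_indicator_lt_right [NormedSpace ℝ E] (hs : MeasurableSet s) (y : ℝ) :
    ∫ x in s, {p : ℝ × ℝ | p.1 < p.2}.indicator (fun p => F p.1 p.2) (x, y) =
      ∫ x in s ∩ Iio y, F x y := by
  rw [← integral_indicator (hs.inter measurableSet_Iio), ← integral_indicator hs]
  congr 1 with x
  by_cases hxy : x < y <;> by_cases hx : x ∈ s <;> simp [hxy, hx]

theorem integral_integral_Ioi_swap [NormedSpace ℝ E] (hs : MeasurableSet s) (hsa : s ⊆ Ici a)
    (hF : AEStronglyMeasurable (fun p : ℝ × ℝ => F p.1 p.2)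
      ((volume.restrict s).prod (volume.restrict (Ioi a))))
    (hg : IntegrableOn g s) (hh : IntegrableOn h (Ioi a))
    (hbd : ∀ x ∈ s, ∀ y, x < y → ‖F x y‖ ≤ g x * h y) :
    ∫ x in s, ∫ y in Ioi x, F x y = ∫ y in Ioi a, ∫ x in s ∩ Iio y, F x y := by
  rw [← setIntegral_congr_fun hs fun x hx => setIntegral_indicator_lt_left (hsa hx)]
  simp_rw [← setIntegral_indicator_lt_right hs]
  exact integral_integral_swap (integrable_indicator_lt_of_norm_le_mul hs hF hg hh hbd)

theorem integrableOn_integral_inter_Iio [NormedSpace ℝ E] (hs : MeasurableSet s)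
    (hF : AEStronglyMeasurable (fun p : ℝ × ℝ => F p.1 p.2)
      ((volume.restrict s).prod (volume.restrict (Ioi a))))
    (hg : IntegrableOn g s) (hh : IntegrableOn h (Ioi a))
    (hbd : ∀ x ∈ s, ∀ y, x < y → ‖F x y‖ ≤ g x * h y) :
    IntegrableOn (fun y => ∫ x in s ∩ Iio y, F x y) (Ioi a) := by
  simp_rw [← setIntegral_indicator_lt_right hs]
  exact (integrable_indicator_lt_of_norm_le_mul hs hF hg hh hbd).integral_prod_right

end TriangleFubini

lemma integral_Ioo_eq_sub_of_hasDerivAt {f f' : ℝ → ℝ} {a b : ℝ} (hab : a ≤ b)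
    (hf : ∀ x, HasDerivAt f (f' x) x) (hf' : Continuous f') :
    ∫ x in Ioo a b, f' x = f b - f a := by
  rw [← integral_Ioc_eq_integral_Ioo, ← intervalIntegral.integral_of_le hab,
    intervalIntegral.integral_eq_sub_of_hasDerivAt (fun x _ => hf x) (hf'.intervalIntegrable a b)]

/-- The Green kernel of `𝔖_u` at `z` times the phase of `W[V]` at `b`, with `a = x₀`, `c = η k`. -/
noncomputable def phaseKernel (k a c z b : ℝ) : ℝ :=
  Real.sin (k * (z - a)) / k * Real.sin (k * (2 * b - z) - c)

section PhaseKernel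

variable {k a c : ℝ}

lemma hasDerivAt_phaseKernel_left (hk : k ≠ 0) (b z : ℝ) :
    HasDerivAt (fun z => phaseKernel k a c z b) (Real.sin (k * (2 * b - 2 * z + a) - c)) z := by
  have h₁ : HasDerivAt (fun z => Real.sin (k * (z - a)) / k) (Real.cos (k * (z - a))) z :=
    ((((hasDerivAt_id' z).sub_const a).const_mul k).sin.div_const k).congr_deriv (by field_simp)
  have h₂ : HasDerivAt (fun z => Real.sin (k * (2 * b - z) - c))
      (-(k * Real.cos (k * (2 * b - z) - c))) z :=
    ((((hasDerivAt_id' z).const_sub (2 * b)).const_mul k).sub_const c).sin.congr_deriv (by ring)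
  refine (h₁.mul h₂).congr_deriv ?_
  rw [show k * (2 * b - 2 * z + a) - c = (k * (2 * b - z) - c) - k * (z - a) by ring,
    Real.sin_sub (k * (2 * b - z) - c)]
  field_simp
  ring

lemma hasDerivAt_phaseKernel_diag (hk : k ≠ 0) (y : ℝ) :
    HasDerivAt (fun y => phaseKernel k a c y y) (Real.sin (k * (2 * y - a) - c)) y := by
  have h₁ : HasDerivAt (fun y => Real.sin (k * (y - a)) / k) (Real.cos (k * (y - a))) y :=
    ((((hasDerivAt_id' y).sub_const a).const_mul k).sin.div_const k).congr_deriv (by field_simp)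
  have h₂ : HasDerivAt (fun y => Real.sin (k * y - c)) (k * Real.cos (k * y - c)) y :=
    (((hasDerivAt_id' y).const_mul k).sub_const c).sin.congr_deriv (by ring)
  have hdiag : (fun y => phaseKernel k a c y y) =
      fun y => Real.sin (k * (y - a)) / k * Real.sin (k * y - c) := by
    ext y
    simp only [phaseKernel]
    ring_nf
  rw [hdiag]
  refine (h₁.mul h₂).congr_deriv ?_
  rw [show k * (2 * y - a) - c = k * (y - a) + (k * y - c) by ring, Real.sin_add]
  field_simp
  ring

lemma integral_Ioo_sin_eq_phaseKernel (hk : k ≠ 0) (b : ℝ) {w : ℝ} (hw : a ≤ w) :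
    ∫ x in Ioo a w, Real.sin (k * (2 * b - 2 * x + a) - c) = phaseKernel k a c w b := by
  rw [integral_Ioo_eq_sub_of_hasDerivAt hw (hasDerivAt_phaseKernel_left hk b) (by fun_prop)]
  simp [phaseKernel]

lemma integral_Ioo_sin_eq_phaseKernel_diag (hk : k ≠ 0) {y : ℝ} (hy : a ≤ y) :
    ∫ x in Ioo a y, Real.sin (k * (2 * x - a) - c) = phaseKernel k a c y y := by
  rw [integral_Ioo_eq_sub_of_hasDerivAt hy (hasDerivAt_phaseKernel_diag hk) (by fun_prop)]
  simp [phaseKernel]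

lemma abs_phaseKernel_le (hk : 0 < k) (z b : ℝ) : |phaseKernel k a c z b| ≤ k⁻¹ := by
  rw [phaseKernel, abs_mul, abs_div, abs_of_pos hk, div_eq_mul_inv]
  calc |Real.sin (k * (z - a))| * k⁻¹ * |Real.sin (k * (2 * b - z) - c)| ≤ 1 * k⁻¹ * 1 := by
        gcongr <;> exact Real.abs_sin_le_one _
    _ = k⁻¹ := by ring

@[fun_prop]
lemma continuous_phaseKernel : Continuous fun p : ℝ × ℝ => phaseKernel k a c p.1 p.2 := by
  unfold phaseKernel
  fun_prop

end PhaseKernel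

section IntegrationByParts

variable {u V Vu : ℝ → ℂ} {k a c : ℝ}

lemma integral_Ioo_tail_mul_sin (hum : Measurable u) (hu : IntegrableOn u (Ioi a))
    (hVu : ∀ x, Vu x = ∫ y in Ioi x, u y) (hk : 0 < k) {b : ℝ} (hab : a < b) :
    ∫ x in Ioo a b, Vu x * (Real.sin (k * (2 * b - 2 * x + a) - c) : ℂ) =
      (∫ z in Ioo a b, u z * (phaseKernel k a c z b : ℂ)) +
        Vu b * (phaseKernel k a c b b : ℂ) := by
  have hint : IntegrableOn (fun z => u z * (phaseKernel k a c (min b z) b : ℂ)) (Ioi a) :=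
    hu.mul_bdd (by fun_prop) <| ae_of_all _ fun z => by
      rw [Complex.norm_real, Real.norm_eq_abs]; exact abs_phaseKernel_le hk _ _
  calc ∫ x in Ioo a b, Vu x * (Real.sin (k * (2 * b - 2 * x + a) - c) : ℂ)
      = ∫ x in Ioo a b, ∫ z in Ioi x, u z * (Real.sin (k * (2 * b - 2 * x + a) - c) : ℂ) := by
        refine setIntegral_congr_fun measurableSet_Ioo fun x _ => ?_
        rw [hVu, integral_mul_const]
    _ = ∫ z in Ioi a, ∫ x in Ioo a b ∩ Iio z,
          u z * (Real.sin (k * (2 * b - 2 * x + a) - c) : ℂ) :=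
        integral_integral_Ioi_swap (g := fun _ => 1) measurableSet_Ioo
          (Ioo_subset_Ioi_self.trans Ioi_subset_Ici_self)
          (by fun_prop : Measurable _).aestronglyMeasurable
          (integrableOn_const measure_Ioo_lt_top.ne) hu.norm fun x _ z _ => by
            rw [norm_mul, Complex.norm_real, Real.norm_eq_abs, one_mul]
            exact mul_le_of_le_one_right (norm_nonneg _) (Real.abs_sin_le_one _)
    _ = ∫ z in Ioi a, u z * (phaseKernel k a c (min b z) b : ℂ) := by
        refine setIntegral_congr_fun measurableSet_Ioi fun z hz => ?_
        rw [Ioo_inter_Iio, integral_const_mul, integral_complex_ofReal,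
          integral_Ioo_sin_eq_phaseKernel hk.ne' b (le_min hab.le hz.out.le)]
    _ = (∫ z in Ioo a b, u z * (phaseKernel k a c z b : ℂ)) +
          ∫ z in Ioi b, u z * (phaseKernel k a c b b : ℂ) := by
        rw [← Ioc_union_Ioi_eq_Ioi hab.le,
          setIntegral_union Ioc_disjoint_Ioi_same measurableSet_Ioi
            (hint.mono_set Ioc_subset_Ioi_self) (hint.mono_set (Ioi_subset_Ioi hab.le)),
          integral_Ioc_eq_integral_Ioo,
          setIntegral_congr_fun measurableSet_Ioo fun z hz => by rw [min_eq_right hz.2.le],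
          setIntegral_congr_fun measurableSet_Ioi fun z hz => by rw [min_eq_left hz.out.le]]
    _ = (∫ z in Ioo a b, u z * (phaseKernel k a c z b : ℂ)) +
          Vu b * (phaseKernel k a c b b : ℂ) := by
        rw [integral_mul_const, hVu]

lemma norm_mul_mul_phaseKernel_le (hk : 0 < k) (z b : ℝ) :
    ‖V b * (u z * (phaseKernel k a c z b : ℂ))‖ ≤ ‖u z‖ * (‖V b‖ * k⁻¹) := by
  rw [norm_mul, norm_mul, Complex.norm_real, Real.norm_eq_abs, mul_left_comm]
  gcongr
  exact abs_phaseKernel_le hk z b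

lemma integral_green_mul_W_eq (hum : Measurable u) (hVm : Measurable V)
    (hu : IntegrableOn u (Ioi a)) (hV : IntegrableOn V (Ioi a)) (hk : 0 < k) :
    ∫ z in Ioi a, ((Real.sin (k * (z - a)) / k : ℝ) : ℂ) * u z *
        ∫ b in Ioi z, V b * (Real.sin (k * (2 * b - z) - c) : ℂ) =
      ∫ b in Ioi a, V b * ∫ z in Ioo a b, u z * (phaseKernel k a c z b : ℂ) :=
  calc _ = ∫ z in Ioi a, ∫ b in Ioi z, V b * (u z * (phaseKernel k a c z b : ℂ)) := by
        refine setIntegral_congr_fun measurableSet_Ioi fun z _ => ?_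
        rw [← integral_const_mul]
        congr 1 with b
        simp only [phaseKernel]
        push_cast
        ring
    _ = ∫ b in Ioi a, ∫ z in Ioi a ∩ Iio b, V b * (u z * (phaseKernel k a c z b : ℂ)) :=
        integral_integral_Ioi_swap measurableSet_Ioi Ioi_subset_Ici_self
          (by fun_prop : Measurable _).aestronglyMeasurable hu.norm (hV.norm.mul_const _)
          fun z _ b _ => norm_mul_mul_phaseKernel_le hk z b
    _ = _ := setIntegral_congr_fun measurableSet_Ioi fun b _ => by
        rw [Ioi_inter_Iio, integral_const_mul]

lemma integrableOn_mul_integral_phaseKernel (hum : Measurable u) (hVm : Measurable V)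
    (hu : IntegrableOn u (Ioi a)) (hV : IntegrableOn V (Ioi a)) (hk : 0 < k) :
    IntegrableOn (fun b => V b * ∫ z in Ioo a b, u z * (phaseKernel k a c z b : ℂ)) (Ioi a) :=
  (integrableOn_integral_inter_Iio (F := fun z b => V b * (u z * (phaseKernel k a c z b : ℂ)))
    measurableSet_Ioi
    (by fun_prop : Measurable _).aestronglyMeasurable hu.norm (hV.norm.mul_const _)
    fun z _ b _ => norm_mul_mul_phaseKernel_le hk z b).congr_fun
    (fun b _ => by simp only [Ioi_inter_Iio, integral_const_mul]) measurableSet_Ioi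

lemma integral_W_two_eq (hVum : Measurable Vu) (hVm : Measurable V)
    (hVu : IntegrableOn Vu (Ioi a)) (hV : IntegrableOn V (Ioi a)) :
    ∫ x in Ioi a, ∫ b in Ioi x, Vu x * V b * (Real.sin (k * (2 * b - 2 * x + a) - c) : ℂ) =
      ∫ b in Ioi a,
        V b * ∫ x in Ioo a b, Vu x * (Real.sin (k * (2 * b - 2 * x + a) - c) : ℂ) := by
  rw [integral_integral_Ioi_swap measurableSet_Ioi Ioi_subset_Ici_self
    (by fun_prop : Measurable _).aestronglyMeasurable hVu.norm hV.norm fun x _ b _ => ?_]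
  · refine setIntegral_congr_fun measurableSet_Ioi fun b _ => ?_
    rw [Ioi_inter_Iio, ← integral_const_mul]
    congr 1 with x
    ring
  · rw [norm_mul, norm_mul, Complex.norm_real, Real.norm_eq_abs]
    exact mul_le_of_le_one_right (by positivity) (Real.abs_sin_le_one _)

lemma integral_W_star_eq (hVum : Measurable Vu) (hVm : Measurable V) {w : ℝ → ℝ}
    (hw : AntitoneOn w (Ici a)) (hwi : IntegrableOn w (Ioi a)) (hVuw : ∀ x, a ≤ x → ‖Vu x‖ ≤ w x)
    (hV : IntegrableOn V (Ioi a)) (hk : k ≠ 0) :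
    ∫ x in Ioi a, (∫ y in Ioi x, Vu y * V y) * (Real.sin (k * (2 * x - a) - c) : ℂ) =
      ∫ y in Ioi a, Vu y * V y * (phaseKernel k a c y y : ℂ) :=
  calc _ = ∫ x in Ioi a, ∫ y in Ioi x, Vu y * V y * (Real.sin (k * (2 * x - a) - c) : ℂ) :=
        setIntegral_congr_fun measurableSet_Ioi fun x _ => by rw [integral_mul_const]
    _ = ∫ y in Ioi a, ∫ x in Ioi a ∩ Iio y, Vu y * V y * (Real.sin (k * (2 * x - a) - c) : ℂ) :=
        integral_integral_Ioi_swap measurableSet_Ioi Ioi_subset_Ici_self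
          (by fun_prop : Measurable _).aestronglyMeasurable hwi hV.norm fun x hx y hxy => by
            -- the sine factor does not decay in `x`; the antitone majorant of `V_u` does
            have hy : a ≤ y := (hx.out.trans hxy).le
            rw [norm_mul, norm_mul, Complex.norm_real, Real.norm_eq_abs]
            exact (mul_le_of_le_one_right (by positivity) (Real.abs_sin_le_one _)).trans
              (mul_le_mul_of_nonneg_right ((hVuw y hy).trans (hw hx.out.le hy hxy.le))
                (norm_nonneg _))
    _ = _ := setIntegral_congr_fun measurableSet_Ioi fun y hy => by
        rw [Ioi_inter_Iio, integral_const_mul, integral_complex_ofReal,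
          integral_Ioo_sin_eq_phaseKernel_diag hk hy.out.le]

theorem integral_green_mul_W_eq_sub (hum : Measurable u) (hVm : Measurable V)
    (hu : IntegrableOn u (Ioi a)) (hV : IntegrableOn V (Ioi a))
    (hVu : ∀ x, Vu x = ∫ y in Ioi x, u y) {w : ℝ → ℝ} (hw : AntitoneOn w (Ici a))
    (hwi : IntegrableOn w (Ioi a)) (hVuw : ∀ x, a ≤ x → ‖Vu x‖ ≤ w x) (hk : 0 < k) :
    ∫ z in Ioi a, ((Real.sin (k * (z - a)) / k : ℝ) : ℂ) * u z *
        ∫ b in Ioi z, V b * (Real.sin (k * (2 * b - z) - c) : ℂ) =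
      (∫ x in Ioi a, ∫ b in Ioi x, Vu x * V b * (Real.sin (k * (2 * b - 2 * x + a) - c) : ℂ)) -
        ∫ x in Ioi a, (∫ y in Ioi x, Vu y * V y) * (Real.sin (k * (2 * x - a) - c) : ℂ) := by
  have hVum : Measurable Vu := by
    rw [funext hVu]
    exact (stronglyMeasurable_integral_Ioi hum.stronglyMeasurable).measurable
  have hVui : IntegrableOn Vu (Ioi a) := hwi.mono' hVum.aestronglyMeasurable
    (ae_restrict_of_forall_mem measurableSet_Ioi fun x hx => hVuw x hx.out.le)
  have hstar : IntegrableOn (fun y => Vu y * (phaseKernel k a c y y : ℂ) * V y) (Ioi a) :=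
    hV.bdd_mul (c := w a * k⁻¹) (by fun_prop) <|
      ae_restrict_of_forall_mem measurableSet_Ioi fun y hy => by
        rw [norm_mul, Complex.norm_real, Real.norm_eq_abs]
        exact mul_le_mul ((hVuw y hy.out.le).trans (hw self_mem_Ici hy.out.le hy.out.le))
          (abs_phaseKernel_le hk y y) (abs_nonneg _) ((norm_nonneg _).trans (hVuw a le_rfl))
  rw [integral_green_mul_W_eq hum hVm hu hV hk, integral_W_two_eq hVum hVm hVui hV,
    integral_W_star_eq hVum hVm hw hwi hVuw hV hk.ne', eq_sub_iff_add_eq,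
    ← integral_add (integrableOn_mul_integral_phaseKernel hum hVm hu hV hk)
      (hstar.congr_fun (fun y _ => by ring) measurableSet_Ioi)]
  refine setIntegral_congr_fun measurableSet_Ioi fun b hb => ?_
  rw [integral_Ioo_tail_mul_sin hum hu hVu hk hb]
  ring

end IntegrationByParts

theorem Su_W_single_general
    (η : ℝ → ℝ)
    (u V : ℝ → ℂ) (humeas : Measurable u) (hVmeas : Measurable V)
    (C ε : ℝ) (hC : 0 < C) (hε : 0 < ε)
    (hu : ∀ x : ℝ, 0 ≤ x → ‖u x‖ ≤ C * (1 + x) ^ (-(2 + ε)))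
    (hV : ∀ x : ℝ, 0 ≤ x → ‖V x‖ ≤ C * (1 + x) ^ (-(1 + ε)))
    (Vu : ℝ → ℂ) (hVu : ∀ x : ℝ, Vu x = ∫ y in Set.Ioi x, u y) :
    ∀ x₀ : ℝ, 0 ≤ x₀ → ∀ k : ℝ, 0 < k →
      (∫ x₁ in Set.Ioi x₀,
          ((Real.sin (k * (x₁ - x₀)) / k : ℝ) : ℂ) * u x₁ *
            ((Real.sqrt (2 / Real.pi) : ℝ) *
              ∫ x₂ in Set.Ioi x₁,
                V x₂ * ((Real.sin (k * (2 * x₂ - x₁) - η k) : ℝ) : ℂ))) =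
        (Real.sqrt (2 / Real.pi) : ℝ) *
            (∫ x₁ in Set.Ioi x₀, ∫ x₂ in Set.Ioi x₁,
              Vu x₁ * V x₂ *
                ((Real.sin (k * (2 * x₂ - 2 * x₁ + x₀) - η k) : ℝ) : ℂ)) -
          (Real.sqrt (2 / Real.pi) : ℝ) *
            ∫ x₁ in Set.Ioi x₀,
              (∫ y in Set.Ioi x₁, Vu y * V y) *
                ((Real.sin (k * (2 * x₁ - x₀) - η k) : ℝ) : ℂ) := by
  intro x₀ hx₀ k hk
  have hVu_le : ∀ x, x₀ ≤ x → ‖Vu x‖ ≤ C / (1 + ε) * (1 + x) ^ (-(1 + ε)) := fun x hx => by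
    have h := norm_integral_Ioi_le_of_norm_le_rpow (by linarith : (1 : ℝ) < 2 + ε)
      (hx₀.trans hx) hu
    rw [hVu]
    convert h using 3 <;> ring
  rw [← mul_sub, ← integral_green_mul_W_eq_sub humeas hVmeas
    (integrableOn_Ioi_of_norm_le_rpow (by linarith) hx₀ humeas.aestronglyMeasurable hu)
    (integrableOn_Ioi_of_norm_le_rpow (by linarith) hx₀ hVmeas.aestronglyMeasurable hV) hVu
    ((antitoneOn_mul_one_add_rpow_neg (div_pos hC (by linarith)).le (by linarith)).mono
      (Ici_subset_Ioi.2 (by linarith)))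
    ((integrableOn_one_add_rpow_neg (by linarith) (by linarith)).const_mul _) hVu_le hk,
    ← integral_const_mul]
  congr 1 with x₁
  ring

/-- The integration-by-parts identity `𝔖_u W[V] = W[V_u, V] − W[V_u ⋆ V]`,
written out with all kernels explicit. -/
theorem Su_W_single
    (v : ℝ → ℝ) (hv_meas : Measurable v) (C₀ ρ : ℝ)
    (hC₀ : 0 < C₀) (hρ : 2 < ρ)
    (hv : ∀ x : ℝ, 0 ≤ x → |v x| ≤ C₀ * (1 + x) ^ (-ρ))
    (θ : ℝ → ℝ → ℂ)
    (hθcont : ∀ k : ℝ, k ≠ 0 → ContinuousOn (θ k) (Set.Ici 0))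
    (hθbdd : ∀ k : ℝ, k ≠ 0 → ∃ M : ℝ, ∀ x : ℝ, 0 ≤ x → ‖θ k x‖ ≤ M)
    (hθeq : ∀ k : ℝ, k ≠ 0 → ∀ x : ℝ, 0 ≤ x →
      θ k x = Complex.exp (Complex.I * k * x) +
        (k : ℂ)⁻¹ * ∫ y in Set.Ioi x,
          Complex.sin ((k : ℂ) * ((x : ℂ) - (y : ℂ))) * (v y : ℂ) * θ k y)
    (η : ℝ → ℝ)
    (hηcont : ContinuousOn η (Set.Ioi 0))
    (hηlim : Tendsto η atTop (nhds 0))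
    (hηeq : ∀ k : ℝ, 0 < k →
      θ k 0 = ((‖θ k 0‖ : ℝ) : ℂ) * Complex.exp (Complex.I * η k))
    (u V : ℝ → ℂ) (humeas : Measurable u) (hVmeas : Measurable V)
    (C ε : ℝ) (hC : 0 < C) (hε : 0 < ε)
    (hu : ∀ x : ℝ, 0 ≤ x → ‖u x‖ ≤ C * (1 + x) ^ (-(2 + ε)))
    (hV : ∀ x : ℝ, 0 ≤ x → ‖V x‖ ≤ C * (1 + x) ^ (-(1 + ε)))
    (Vu : ℝ → ℂ) (hVu : ∀ x : ℝ, Vu x = ∫ y in Set.Ioi x, u y) :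
    ∀ x₀ : ℝ, 0 ≤ x₀ → ∀ k : ℝ, 0 < k →
      (∫ x₁ in Set.Ioi x₀,
          ((Real.sin (k * (x₁ - x₀)) / k : ℝ) : ℂ) * u x₁ *
            ((Real.sqrt (2 / Real.pi) : ℝ) *
              ∫ x₂ in Set.Ioi x₁,
                V x₂ * ((Real.sin (k * (2 * x₂ - x₁) - η k) : ℝ) : ℂ))) =
        (Real.sqrt (2 / Real.pi) : ℝ) *
            (∫ x₁ in Set.Ioi x₀, ∫ x₂ in Set.Ioi x₁,
              Vu x₁ * V x₂ *
                ((Real.sin (k * (2 * x₂ - 2 * x₁ + x₀) - η k) : ℝ) : ℂ)) -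
          (Real.sqrt (2 / Real.pi) : ℝ) *
            ∫ x₁ in Set.Ioi x₀,
              (∫ y in Set.Ioi x₁, Vu y * V y) *
                ((Real.sin (k * (2 * x₁ - x₀) - η k) : ℝ) : ℂ) :=
  Su_W_single_general η u V humeas hVmeas C ε hC hε hu hV Vu hVu
end

section
/- Let Γ₂ : ℝ → ℂ be defined by Γ₂(α) := tanh(πα) + i / cosh(πα). Then |Γ₂(α)| = 1 for every α ∈ ℝ, Γ₂(α) → ∓1 as α → ∓∞, and the winding number of Γ₂ computed by the integral formula equals −1/2, i.e. (1/(2πi)) ∫_{−∞}^{∞} conj(Γ₂(α)) Γ₂'(α) dα = −1/2. -/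
open MeasureTheory Filter

/-- The curve `Γ₂(α) = tanh(πα) + i/cosh(πα)` arising from the edge
`{−∞} × ℝ` in the topological Levinson theorem (zero-energy-resonance case). -/
noncomputable def Γ₂ (α : ℝ) : ℂ :=
  (Real.tanh (Real.pi * α) : ℝ) + Complex.I / (Real.cosh (Real.pi * α) : ℝ)

/-!
With the Gudermannian function `gd = arctan ∘ sinh` one has `sin gd = tanh` and `cos gd = sech`,
so `Γ₂(α) = i · exp(-i gd(πα))`: a unimodular curve whose real phase `-gd(πα)` decreases from
`π/2` to `-π/2`. For any curve `c · exp(iθ)` with `|c| = 1` the winding integrand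
`conj(γ) γ'` equals `i θ'`, so the winding number is `(θ(+∞) - θ(-∞)) / 2π = -1/2`.
-/

open Topology ComplexConjugate

section Winding

open Complex

variable {θ : ℝ → ℝ} {c : ℂ}

lemma conj_mul_deriv_mul_exp_ofReal_mul_I (hc : ‖c‖ = 1) {θ' t : ℝ} (hθ : HasDerivAt θ θ' t) :
    conj (c * exp (θ t * I)) * deriv (fun s ↦ c * exp (θ s * I)) t = θ' * I := by
  have hγ : HasDerivAt (fun s ↦ c * exp (θ s * I)) (c * exp (θ t * I) * (θ' * I)) t := by
    simpa only [mul_assoc] using ((hθ.ofReal_comp.mul_const I).cexp).const_mul c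
  have hcc : conj c * c = 1 := by
    rw [← normSq_eq_conj_mul_self, normSq_eq_norm_sq, hc]; norm_num
  rw [hγ.deriv, map_mul, ← exp_conj, map_mul, conj_ofReal, conj_I, mul_neg]
  calc conj c * exp (-(θ t * I)) * (c * exp (θ t * I) * (θ' * I))
      = (conj c * c) * (exp (-(θ t * I)) * exp (θ t * I)) * (θ' * I) := by ring
    _ = θ' * I := by rw [hcc, ← exp_add, neg_add_cancel, exp_zero, one_mul, one_mul]

theorem winding_integral_mul_exp_ofReal_mul_I (hc : ‖c‖ = 1) {θ' : ℝ → ℝ} {a b : ℝ}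
    (hθ : ∀ t, HasDerivAt θ (θ' t) t) (hθ' : Integrable θ')
    (ha : Tendsto θ atBot (𝓝 a)) (hb : Tendsto θ atTop (𝓝 b)) :
    1 / (2 * Real.pi * I) * ∫ t, conj (c * exp (θ t * I)) * deriv (fun s ↦ c * exp (θ s * I)) t
      = (b - a) / (2 * Real.pi) := by
  have hint : ∫ t, (θ' t : ℂ) = ((b - a : ℝ) : ℂ) := by
    rw [integral_complex_ofReal, integral_of_hasDerivAt_of_tendsto hθ hθ' ha hb]
  simp_rw [conj_mul_deriv_mul_exp_ofReal_mul_I hc (hθ _), integral_mul_const, hint]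
  field_simp [Real.pi_ne_zero, I_ne_zero]
  push_cast; ring

end Winding

section Gudermannian

open Real

noncomputable def gudermannian (x : ℝ) : ℝ := arctan (sinh x)

lemma sqrt_one_add_sinh_sq (x : ℝ) : √(1 + sinh x ^ 2) = cosh x := by
  rw [← cosh_sq', sqrt_sq (cosh_pos x).le]

lemma sin_gudermannian (x : ℝ) : sin (gudermannian x) = tanh x := by
  rw [gudermannian, sin_arctan, sqrt_one_add_sinh_sq, tanh_eq_sinh_div_cosh]

lemma cos_gudermannian (x : ℝ) : cos (gudermannian x) = (cosh x)⁻¹ := by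
  rw [gudermannian, cos_arctan, sqrt_one_add_sinh_sq, one_div]

lemma hasDerivAt_gudermannian (x : ℝ) : HasDerivAt gudermannian (cosh x)⁻¹ x := by
  refine (hasDerivAt_sinh x).arctan.congr_deriv ?_
  rw [← cosh_sq']
  field_simp [(cosh_pos x).ne']

lemma tendsto_gudermannian_atTop : Tendsto gudermannian atTop (𝓝 (π / 2)) :=
  (tendsto_nhds_of_tendsto_nhdsWithin tendsto_arctan_atTop).comp sinhOrderIso.tendsto_atTop

lemma tendsto_gudermannian_atBot : Tendsto gudermannian atBot (𝓝 (-(π / 2))) :=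
  (tendsto_nhds_of_tendsto_nhdsWithin tendsto_arctan_atBot).comp sinhOrderIso.tendsto_atBot

lemma one_add_sq_div_two_le_cosh (x : ℝ) : 1 + x ^ 2 / 2 ≤ cosh x := by
  have hsq : (x / 2) ^ 2 ≤ sinh (x / 2) ^ 2 := by
    rw [← sq_abs, ← sq_abs (sinh _), abs_sinh]
    exact pow_le_pow_left₀ (abs_nonneg _) (self_le_sinh_iff.2 (abs_nonneg _)) 2
  have hcosh : cosh x = 1 + 2 * sinh (x / 2) ^ 2 := by
    rw [← mul_div_cancel₀ x two_ne_zero, cosh_two_mul, cosh_sq]; ring_nf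
  linarith

lemma integrable_inv_cosh : Integrable fun x ↦ (cosh x)⁻¹ := by
  refine (integrable_inv_one_add_sq.const_mul 2).mono' (by fun_prop) (.of_forall fun x ↦ ?_)
  have h := one_add_sq_div_two_le_cosh x
  rw [norm_inv, norm_of_nonneg (cosh_pos x).le, ← div_eq_mul_inv, le_div_iff₀ (by positivity),
    inv_mul_le_iff₀ (cosh_pos x)]
  nlinarith

end Gudermannian

open Complex
open scoped Real

lemma Γ₂_eq_I_mul_exp (α : ℝ) : Γ₂ α = I * exp (↑(-gudermannian (π * α)) * I) := by
  rw [exp_mul_I, ← ofReal_cos, ← ofReal_sin, Real.cos_neg, Real.sin_neg, cos_gudermannian,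
    sin_gudermannian, Γ₂, ofReal_neg, ofReal_inv]
  linear_combination (Real.tanh (π * α) : ℂ) * I_sq

/-- `|Γ₂| ≡ 1`, `Γ₂(α) → ∓1` as `α → ∓∞`, and the winding number of `Γ₂`
computed by the integral formula equals `−1/2`. -/
theorem Gamma2_winding_number :
    (∀ α : ℝ, ‖Γ₂ α‖ = 1) ∧
    Tendsto Γ₂ atBot (nhds (-1)) ∧
    Tendsto Γ₂ atTop (nhds 1) ∧
    (1 / (2 * Real.pi * Complex.I)) *
        (∫ α : ℝ, (starRingEnd ℂ) (Γ₂ α) * deriv Γ₂ α) = -(1 / 2) := by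
  set θ : ℝ → ℝ := fun α ↦ -gudermannian (π * α)
  have hΓ : Γ₂ = fun α ↦ I * exp (θ α * I) := funext Γ₂_eq_I_mul_exp
  have hθ : ∀ α, HasDerivAt θ (-((Real.cosh (π * α))⁻¹ * π)) α := fun α ↦ by
    have hπα := (hasDerivAt_id' α).const_mul π
    rw [mul_one] at hπα
    exact ((hasDerivAt_gudermannian _).comp α hπα).neg
  have hθ_int : Integrable fun α ↦ -((Real.cosh (π * α))⁻¹ * π) :=
    ((integrable_inv_cosh.comp_mul_left' Real.pi_ne_zero).mul_const π).neg
  have hθ_bot : Tendsto θ atBot (𝓝 (π / 2)) := by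
    simpa using (tendsto_gudermannian_atBot.comp (tendsto_id.const_mul_atBot Real.pi_pos)).neg
  have hθ_top : Tendsto θ atTop (𝓝 (-(π / 2))) :=
    (tendsto_gudermannian_atTop.comp (tendsto_id.const_mul_atTop Real.pi_pos)).neg
  have hcont : Continuous fun s : ℝ ↦ I * exp (s * I) := by fun_prop
  rw [hΓ]
  refine ⟨fun α ↦ by simp [norm_exp_ofReal_mul_I], ?_, ?_, ?_⟩
  · refine (hcont.tendsto' _ _ ?_).comp hθ_bot
    simp only [ofReal_div, ofReal_ofNat, exp_pi_div_two_mul_I, I_mul_I]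
  · refine (hcont.tendsto' _ _ ?_).comp hθ_top
    simp only [ofReal_neg, ofReal_div, ofReal_ofNat, ← neg_div, exp_neg_pi_div_two_mul_I, mul_neg,
      I_mul_I, neg_neg]
  · rw [winding_integral_mul_exp_ofReal_mul_I (by simp) hθ hθ_int hθ_bot hθ_top]
    push_cast
    field_simp
    ring
end
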